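/- arXiv:1409.6266 — 11 statements merged into one kernel-verified Lean document; each statement's English description precedes it below -/
import Mathlib

section
/- If A_k = {a_0=0, a_1=1, a_2, ..., a_k} is a symmetric basis (i.e. a_i + a_{k-i} = a_k for all 1 ≤ i ≤ k-1) and every integer x with 0 ≤ x ≤ a_k can be written as a_i + a_j for some i, j, then every integer x with 0 ≤ x ≤ 2a_k can be written as a_i + a_j. Hence the 2-range n(A_k) equals 2a_k. -/
/-- Theorem 1: a symmetric admissible basis has 2-range `2 * a k`. -/
theorem symmetric_basis_range (k : ℕ) (a : ℕ → ℕ)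
    (hk : 2 ≤ k)
    (h0 : a 0 = 0) (h1 : a 1 = 1)
    (hmono : StrictMonoOn a (Set.Iic k))
    (hsym : ∀ i, 1 ≤ i → i ≤ k - 1 → a i + a (k - i) = a k)
    (hgen : ∀ x ≤ a k, ∃ i ≤ k, ∃ j ≤ k, a i + a j = x) :
    ∀ x ≤ 2 * a k, ∃ i ≤ k, ∃ j ≤ k, a i + a j = x := by
  have hfull : ∀ i ≤ k, a i + a (k - i) = a k := by
    intro i hi
    rcases Nat.eq_zero_or_pos i with rfl | hpos
    · simp [h0]
    rcases eq_or_lt_of_le hi with rfl | hlt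
    · simp [h0]
    · exact hsym i hpos (by omega)
  intro x hx
  rcases le_or_gt x (a k) with h | h
  · exact hgen x h
  · obtain ⟨i, hi, j, hj, hij⟩ := hgen (2 * a k - x) (by omega)
    refine ⟨k - i, by omega, k - j, by omega, ?_⟩
    have h1 := hfull i hi
    have h2 := hfull j hj
    omega
end

section
/- Let A_j = {0, 1, a_2, ..., a_j} be a basis and for each m define A_{j+m} by appending b_1, ..., b_m where b_0 = a_j and b_i = b_{i-1} + p. If A_{j+m} is admissible (i.e. all integers 0 ≤ x ≤ b_{m+1} - 1 have a generation as a sum of two elements) for all m ≥ 0, then the set of residues {a_i mod p : 0 ≤ i ≤ j} equals all of {0, 1, ..., p-1}. -/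
/-- Theorem 2: if every arithmetic `p`-extension of `A_j` is admissible,
then the residues of the elements of `A_j` mod `p` cover all of `{0,…,p-1}`.
The elements of `A_{j+m}` are `{a i : i ≤ j} ∪ {a j + i*p : i ≤ m}`. -/
theorem extensible_requires_all_residues (p j : ℕ) (hp : 2 ≤ p) (a : ℕ → ℕ)
    (h0 : a 0 = 0) (h1 : a 1 = 1)
    (hmono : StrictMonoOn a (Set.Iic j))
    (hadm : ∀ m : ℕ, ∀ x ≤ a j + (m + 1) * p - 1,
      ∃ u, ((∃ i ≤ j, a i = u) ∨ (∃ i ≤ m, a j + i * p = u)) ∧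
      ∃ v, ((∃ i ≤ j, a i = v) ∨ (∃ i ≤ m, a j + i * p = v)) ∧ u + v = x) :
    ∀ r < p, ∃ i ≤ j, a i % p = r := by
  intro r hr
  set m := a j + 1 with hm
  have hxle : a j + m * p + r ≤ a j + (m + 1) * p - 1 := by
    have h1 : (m + 1) * p = m * p + p := by ring
    omega
  obtain ⟨u, hu, v, hv, huv⟩ := hadm m (a j + m * p + r) hxle
  have hle : ∀ i ≤ j, a i ≤ a j := by
    intro i hi
    exact hmono.monotoneOn (Set.mem_Iic.mpr hi) (Set.mem_Iic.mpr le_rfl) hi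
  have hmp : m * 2 ≤ m * p := Nat.mul_le_mul_left m hp
  rcases hu with ⟨i1, hi1, hui⟩ | ⟨i1, hi1, hui⟩ <;>
    rcases hv with ⟨i2, hi2, hvi⟩ | ⟨i2, hi2, hvi⟩
  · -- both small: impossible
    exfalso
    have h1 := hle i1 hi1
    have h2 := hle i2 hi2
    omega
  · -- u = a i1, v = a j + i2 * p
    refine ⟨i1, hi1, ?_⟩
    have key : a i1 + i2 * p = m * p + r := by
      have := huv
      generalize i2 * p = X at *
      generalize m * p = Y at *
      omega
    have : (a i1 + i2 * p) % p = (r + m * p) % p := by rw [key]; ring_nf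
    rw [Nat.add_mul_mod_self_right, Nat.add_mul_mod_self_right] at this
    rw [this, Nat.mod_eq_of_lt hr]
  · -- v = a i2, u = a j + i1 * p
    refine ⟨i2, hi2, ?_⟩
    have key : a i2 + i1 * p = m * p + r := by
      have := huv
      generalize i1 * p = X at *
      generalize m * p = Y at *
      omega
    have : (a i2 + i1 * p) % p = (r + m * p) % p := by rw [key]; ring_nf
    rw [Nat.add_mul_mod_self_right, Nat.add_mul_mod_self_right] at this
    rw [this, Nat.mod_eq_of_lt hr]
  · -- both extensions
    refine ⟨j, le_rfl, ?_⟩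
    have key : a j + i1 * p + i2 * p = m * p + r := by
      have := huv
      generalize i1 * p = X at *
      generalize i2 * p = Y at *
      generalize m * p = Z at *
      omega
    have : (a j + i1 * p + i2 * p) % p = (r + m * p) % p := by rw [key]; ring_nf
    rw [Nat.add_mul_mod_self_right, Nat.add_mul_mod_self_right,
      Nat.add_mul_mod_self_right] at this
    rw [this, Nat.mod_eq_of_lt hr]
end

section
/- Let A_j be a basis with p-extensions A_{j+m} as defined (b_i = a_j + ip). If A_{j+k} is admissible for some k with 2b_0 ≤ b_{k-1}, then A_{j+m} is admissible for all m ≥ k; in particular A_j is p-extensible. -/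
/-- Theorem 3: if `A_{j+k}` is admissible for some `k ≥ 1` with `2*b 0 ≤ b (k-1)`,
then `A_{j+m}` is admissible for all `m ≥ k`; in particular `A_j` is `p`-extensible.
Here `A_{j+m}` has elements `{a i : i ≤ j} ∪ {a j + i*p : i ≤ m}` and admissibility
means every integer up to the largest element `a j + m*p` is a sum of two elements. -/
theorem first_stage_extensibility (p j k : ℕ) (hp : 2 ≤ p) (a : ℕ → ℕ)
    (h0 : a 0 = 0) (h1 : a 1 = 1)
    (hmono : StrictMonoOn a (Set.Iic j))
    (hk : 1 ≤ k)
    (hb : 2 * a j ≤ a j + (k - 1) * p)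
    (hadm : ∀ x ≤ a j + k * p,
      ∃ u, ((∃ i ≤ j, a i = u) ∨ (∃ i ≤ k, a j + i * p = u)) ∧
      ∃ v, ((∃ i ≤ j, a i = v) ∨ (∃ i ≤ k, a j + i * p = v)) ∧ u + v = x) :
    ∀ m : ℕ, ∀ x ≤ a j + m * p,
      ∃ u, ((∃ i ≤ j, a i = u) ∨ (∃ i ≤ m, a j + i * p = u)) ∧
      ∃ v, ((∃ i ≤ j, a i = v) ∨ (∃ i ≤ m, a j + i * p = v)) ∧ u + v = x := by
  have haj : ∀ i ≤ j, a i ≤ a j := by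
    intro i hi
    rcases eq_or_lt_of_le hi with h | h
    · rw [h]
    · exact (hmono (Set.mem_Iic.mpr hi) (Set.mem_Iic.mpr le_rfl) h).le
  -- key: the statement for m = k + d, by induction on d
  have key : ∀ d : ℕ, ∀ x ≤ a j + (k + d) * p,
      ∃ u, ((∃ i ≤ j, a i = u) ∨ (∃ i ≤ k + d, a j + i * p = u)) ∧
      ∃ v, ((∃ i ≤ j, a i = v) ∨ (∃ i ≤ k + d, a j + i * p = v)) ∧ u + v = x := by
    intro d
    induction d with
    | zero => simpa using hadm
    | succ d ih =>
      intro x hx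
      by_cases hxc : x ≤ a j + (k + d) * p
      · obtain ⟨u, hu, v, hv, huv⟩ := ih x hxc
        refine ⟨u, ?_, v, ?_, huv⟩
        · rcases hu with h | ⟨i, hi, hiu⟩
          · exact Or.inl h
          · exact Or.inr ⟨i, by omega, hiu⟩
        · rcases hv with h | ⟨i, hi, hiv⟩
          · exact Or.inl h
          · exact Or.inr ⟨i, by omega, hiv⟩
      · push_neg at hxc
        have e1 : (k + (d + 1)) * p = k * p + (d + 1) * p := by ring
        have e2 : (k + d) * p = (k - 1) * p + (d + 1) * p := by
          have h' : k - 1 + (d + 1) = k + d := by omega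
          calc (k + d) * p = (k - 1 + (d + 1)) * p := by rw [h']
            _ = (k - 1) * p + (d + 1) * p := by ring
        set y := x - (d + 1) * p with hy
        have hyx : y + (d + 1) * p = x := by omega
        have hy2 : y ≤ a j + k * p := by omega
        have hy3 : a j + (k - 1) * p < y := by omega
        have h2aj : 2 * a j < y := lt_of_le_of_lt hb hy3
        obtain ⟨u, hu, v, hv, huv⟩ := hadm y hy2
        rcases hu with ⟨i, hi, hiu⟩ | ⟨i, hi, hiu⟩
        · rcases hv with ⟨i', hi', hiv⟩ | ⟨i', hi', hiv⟩
          · exfalso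
            have h1' := haj i hi
            have h2' := haj i' hi'
            omega
          · -- shift v
            refine ⟨u, Or.inl ⟨i, hi, hiu⟩, a j + (i' + (d + 1)) * p,
              Or.inr ⟨i' + (d + 1), by omega, rfl⟩, ?_⟩
            have e3 : (i' + (d + 1)) * p = i' * p + (d + 1) * p := by ring
            omega
        · -- shift u
          have hv' : (∃ i ≤ j, a i = v) ∨ (∃ i ≤ k + (d + 1), a j + i * p = v) := by
            rcases hv with h | ⟨i', hi', hiv⟩
            · exact Or.inl h
            · exact Or.inr ⟨i', by omega, hiv⟩
          refine ⟨a j + (i + (d + 1)) * p, Or.inr ⟨i + (d + 1), by omega, rfl⟩, v, hv', ?_⟩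
          have e3 : (i + (d + 1)) * p = i * p + (d + 1) * p := by ring
          omega
  -- truncation: derive the claim for every m from the claim for k + m
  intro m x hx
  have hx' : x ≤ a j + (k + m) * p := by
    have : m * p ≤ (k + m) * p := Nat.mul_le_mul_right p (by omega)
    omega
  obtain ⟨u, hu, v, hv, huv⟩ := key m x hx'
  have trunc : ∀ w, w ≤ x →
      ((∃ i ≤ j, a i = w) ∨ (∃ i ≤ k + m, a j + i * p = w)) →
      ((∃ i ≤ j, a i = w) ∨ (∃ i ≤ m, a j + i * p = w)) := by
    intro w hw h
    rcases h with h | ⟨i, hi, hiw⟩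
    · exact Or.inl h
    · refine Or.inr ⟨i, ?_, hiw⟩
      have hip : i * p ≤ m * p := by omega
      exact Nat.le_of_mul_le_mul_right hip (by omega)
  exact ⟨u, trunc u (by omega) hu, v, trunc v (by omega) hv, huv⟩
end

section
/- Let A_j be a basis with p-extensions A_{j+m} (b_i = a_j + ip). If A_{j+k} is admissible for some k satisfying b_{k-1} < 2b_0 ≤ b_k, then A_j is p-extensible. -/
/-- Theorem 4: if the residues of `A_j` mod `p` cover `{0,…,p-1}` and `A_{j+k}`
is admissible for some `k ≥ 1` with `b_{k-1} < 2*b_0 ≤ b_k`, then `A_j` is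
`p`-extensible (every extension `A_{j+m}` is admissible). -/
theorem second_stage_extensibility (p j k : ℕ) (hp : 2 ≤ p) (a : ℕ → ℕ)
    (h0 : a 0 = 0) (h1 : a 1 = 1)
    (hmono : StrictMonoOn a (Set.Iic j))
    (hres : ∀ r < p, ∃ i ≤ j, a i % p = r)
    (hk : 1 ≤ k)
    (hb1 : a j + (k - 1) * p < 2 * a j)
    (hb2 : 2 * a j ≤ a j + k * p)
    (hadm : ∀ x ≤ a j + k * p,
      ∃ u, ((∃ i ≤ j, a i = u) ∨ (∃ i ≤ k, a j + i * p = u)) ∧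
      ∃ v, ((∃ i ≤ j, a i = v) ∨ (∃ i ≤ k, a j + i * p = v)) ∧ u + v = x) :
    ∀ m : ℕ, ∀ x ≤ a j + m * p,
      ∃ u, ((∃ i ≤ j, a i = u) ∨ (∃ i ≤ m, a j + i * p = u)) ∧
      ∃ v, ((∃ i ≤ j, a i = v) ∨ (∃ i ≤ m, a j + i * p = v)) ∧ u + v = x := by
  intro m x hx
  have hp' : 0 < p := by omega
  by_cases hcase : x ≤ a j + k * p
  · obtain ⟨u, hu, v, hv, huv⟩ := hadm x hcase
    have trim : ∀ w, w ≤ a j + m * p → (∃ i ≤ k, a j + i * p = w) →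
        ∃ i ≤ m, a j + i * p = w := by
      rintro w hw ⟨i, hik, hiw⟩
      refine ⟨i, ?_, hiw⟩
      have h5 : a j + i * p ≤ a j + m * p := hiw ▸ hw
      exact Nat.le_of_mul_le_mul_right (Nat.le_of_add_le_add_left h5) hp'
    have hux : u ≤ a j + m * p := le_trans (by omega) hx
    have hvx : v ≤ a j + m * p := le_trans (by omega) hx
    refine ⟨u, ?_, v, ?_, huv⟩
    · rcases hu with h | h
      · exact Or.inl h
      · exact Or.inr (trim u hux h)
    · rcases hv with h | h
      · exact Or.inl h
      · exact Or.inr (trim v hvx h)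
  · push_neg at hcase
    have hajkp : a j ≤ k * p := by
      have h2 : a j + a j ≤ a j + k * p := by rw [← two_mul]; exact hb2
      exact Nat.le_of_add_le_add_left h2
    have haj_le_x : a j ≤ x :=
      le_trans (Nat.le_add_right _ _) (le_of_lt hcase)
    obtain ⟨t, htj, hat⟩ := hres ((x - a j) % p) (Nat.mod_lt _ hp')
    have hta : a t ≤ a j := by
      rcases eq_or_lt_of_le htj with h | h
      · rw [h]
      · exact le_of_lt (hmono (Set.mem_Iic.2 (le_of_lt h)) (Set.mem_Iic.2 le_rfl) h)
    have htx : a t ≤ x := le_trans hta haj_le_x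
    set d := x - a t with hd
    have hdx : a t + d = x := Nat.add_sub_cancel' htx
    have hdge : a j ≤ d := by
      have h6 : a j + k * p < a t + d := by rw [hdx]; exact hcase
      have h4 : a j + k * p < a j + d := lt_of_lt_of_le h6 (Nat.add_le_add_right hta d)
      exact le_trans hajkp (le_of_lt (Nat.lt_of_add_lt_add_left h4))
    have hmod : a t ≡ (x - a j) [MOD p] := hat
    have hmod2 : a t + a j ≡ x [MOD p] := by
      have h7 := hmod.add_right (a j)
      rwa [Nat.sub_add_cancel haj_le_x] at h7
    have hmod3 : a t + d ≡ a t + a j [MOD p] := by rw [hdx]; exact hmod2.symm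
    have hmod4 : d ≡ a j [MOD p] := Nat.ModEq.add_left_cancel' (a t) hmod3
    obtain ⟨i, hi⟩ := (Nat.modEq_iff_dvd' hdge).mp hmod4.symm
    have key : a j + i * p = d := by
      rw [mul_comm, ← hi]; exact Nat.add_sub_cancel' hdge
    have him : i ≤ m := by
      have h5 : a j + i * p ≤ a j + m * p := by
        rw [key]; exact le_trans (Nat.sub_le _ _) hx
      exact Nat.le_of_mul_le_mul_right (Nat.le_of_add_le_add_left h5) hp'
    exact ⟨a t, Or.inl ⟨t, htj, rfl⟩, a j + i * p, Or.inr ⟨i, him, rfl⟩,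
      by rw [key]; exact hdx⟩
end

section
/- Let A_j be a basis with p-extensions A_{j+m} (b_i = a_j + ip), where the residues of A_j mod p cover all of {0,...,p-1}. If A_{j+k} is admissible for some k satisfying b_k < 2b_0 ≤ b_{k+1}, then A_{j+k+1} is admissible (and hence, by induction, A_j is p-extensible). -/
def Good (a : ℕ → ℕ) (p j m x : ℕ) : Prop :=
  ∃ u, ((∃ i ≤ j, a i = u) ∨ (∃ i ≤ m, a j + i * p = u)) ∧
  ∃ v, ((∃ i ≤ j, a i = v) ∨ (∃ i ≤ m, a j + i * p = v)) ∧ u + v = x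

lemma good_mono {a : ℕ → ℕ} {p j m m' x : ℕ} (h : m ≤ m') :
    Good a p j m x → Good a p j m' x := by
  rintro ⟨u, hu, v, hv, huv⟩
  refine ⟨u, ?_, v, ?_, huv⟩ <;>
  · first
    | exact hu.imp id (fun ⟨i, hi, he⟩ => ⟨i, hi.trans h, he⟩)
    | exact hv.imp id (fun ⟨i, hi, he⟩ => ⟨i, hi.trans h, he⟩)

lemma good_shrink {a : ℕ → ℕ} {p j m m' x : ℕ} (hp : 0 < p)
    (hx : x ≤ a j + m' * p) : Good a p j m x → Good a p j m' x := by
  rintro ⟨u, hu, v, hv, huv⟩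
  have sh : ∀ w, w ≤ x → ((∃ i ≤ j, a i = w) ∨ (∃ i ≤ m, a j + i * p = w)) →
      ((∃ i ≤ j, a i = w) ∨ (∃ i ≤ m', a j + i * p = w)) := by
    rintro w hw (h | ⟨i, hi, he⟩)
    · exact Or.inl h
    · refine Or.inr ⟨i, ?_, he⟩
      have : i * p ≤ m' * p := by omega
      exact Nat.le_of_mul_le_mul_right this hp
  exact ⟨u, sh u (by omega) hu, v, sh v (by omega) hv, huv⟩

lemma good_step (p j k : ℕ) (hp : 2 ≤ p) (a : ℕ → ℕ)
    (hmono : StrictMonoOn a (Set.Iic j))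
    (hres : ∀ r < p, ∃ i ≤ j, a i % p = r)
    (hb2 : 2 * a j ≤ a j + (k + 1) * p)
    (m : ℕ) (hkm : k ≤ m)
    (ih : ∀ x ≤ a j + m * p, Good a p j m x) :
    ∀ x ≤ a j + (m + 1) * p, Good a p j (m + 1) x := by
  intro x hx
  by_cases hxm : x ≤ a j + m * p
  · exact good_mono (Nat.le_succ m) (ih x hxm)
  · push_neg at hxm
    have hmp1 : (m + 1) * p = m * p + p := by ring
    have hkp1 : (k + 1) * p = k * p + p := by ring
    have hmp : m * p ≤ (m + 1) * p := by nlinarith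
    have hkp : (k + 1) * p ≤ (m + 1) * p := by nlinarith
    have hpj : a j ≤ x := by omega
    set w := x - a j with hw
    have hw1 : a j + w = x := by omega
    have hw2 : a j < w + p := by
      have hkm' : k * p ≤ m * p := Nat.mul_le_mul_right p hkm
      omega
    obtain ⟨s, hsj, hs⟩ := hres (w % p) (Nat.mod_lt _ (by omega))
    have hsle : a s ≤ a j := by
      rcases eq_or_lt_of_le hsj with h | h
      · rw [h]
      · exact le_of_lt (hmono (Set.mem_Iic.mpr h.le) (Set.mem_Iic.mpr le_rfl) h)
    have hsw : a s ≤ w := by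
      by_contra hc
      push_neg at hc
      have hdvd : p ∣ a s - w := (Nat.modEq_iff_dvd' hc.le).mp hs.symm
      have := Nat.le_of_dvd (by omega) hdvd
      omega
    have hdvd : p ∣ w - a s := (Nat.modEq_iff_dvd' hsw).mp hs
    obtain ⟨t, ht⟩ := hdvd
    have htle : t ≤ m + 1 := by
      have h1 : p * t ≤ p * (m + 1) := by
        have : w ≤ (m + 1) * p := by omega
        rw [mul_comm p (m + 1)]
        omega
      exact Nat.le_of_mul_le_mul_left h1 (by omega)
    refine ⟨a s, Or.inl ⟨s, hsj, rfl⟩, a j + t * p, Or.inr ⟨t, htle, rfl⟩, ?_⟩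
    rw [mul_comm t p, ← Nat.add_assoc, Nat.add_comm (a s) (a j), Nat.add_assoc, ← ht]
    omega

/-- Theorem 5 (sharp criterion): if the residues of `A_j` mod `p` cover
`{0,…,p-1}` and `A_{j+k}` is admissible for some `k` with `b_k < 2*b_0 ≤ b_{k+1}`,
then `A_{j+k+1}` is admissible, and hence `A_j` is `p`-extensible. -/
theorem sharp_extensibility (p j k : ℕ) (hp : 2 ≤ p) (a : ℕ → ℕ)
    (h0 : a 0 = 0) (h1 : a 1 = 1)
    (hmono : StrictMonoOn a (Set.Iic j))
    (hres : ∀ r < p, ∃ i ≤ j, a i % p = r)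
    (hb1 : a j + k * p < 2 * a j)
    (hb2 : 2 * a j ≤ a j + (k + 1) * p)
    (hadm : ∀ x ≤ a j + k * p,
      ∃ u, ((∃ i ≤ j, a i = u) ∨ (∃ i ≤ k, a j + i * p = u)) ∧
      ∃ v, ((∃ i ≤ j, a i = v) ∨ (∃ i ≤ k, a j + i * p = v)) ∧ u + v = x) :
    (∀ x ≤ a j + (k + 1) * p,
      ∃ u, ((∃ i ≤ j, a i = u) ∨ (∃ i ≤ k + 1, a j + i * p = u)) ∧
      ∃ v, ((∃ i ≤ j, a i = v) ∨ (∃ i ≤ k + 1, a j + i * p = v)) ∧ u + v = x) ∧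
    (∀ m : ℕ, ∀ x ≤ a j + m * p,
      ∃ u, ((∃ i ≤ j, a i = u) ∨ (∃ i ≤ m, a j + i * p = u)) ∧
      ∃ v, ((∃ i ≤ j, a i = v) ∨ (∃ i ≤ m, a j + i * p = v)) ∧ u + v = x) := by
  have key : ∀ m, k ≤ m → ∀ x ≤ a j + m * p, Good a p j m x := by
    intro m hm
    induction m, hm using Nat.le_induction with
    | base => exact hadm
    | succ n hn ih => exact good_step p j k hp a hmono hres hb2 n hn ih
  constructor
  · exact key (k + 1) (Nat.le_succ k)
  · intro m x hx
    by_cases hm : k ≤ m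
    · exact key m hm x hx
    · push_neg at hm
      have hxk : x ≤ a j + k * p := by
        have : m * p ≤ k * p := Nat.mul_le_mul_right p hm.le
        omega
      exact good_shrink (by omega) hx (key k le_rfl x hxk)
end

section
/- Let A_{p-1} be a p-extensible p-basis with extensions b_i = a_{p-1} + ip. Then for any k with b_{k+1} ≥ 2b_0, the integer b_{k+1} has no generation as a sum of two elements of A_{p-1+k}; consequently n(A_{p-1+k}) = b_{k+1} - 1. -/
lemma stohr_aux_res (p : ℕ) (hp : 2 ≤ p) (a : ℕ → ℕ)
    (hres : ∀ r, 0 < r → r < p → ∃! i, (1 ≤ i ∧ i ≤ p - 1) ∧ a i % p = r) :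
    ∀ i, 1 ≤ i → i ≤ p - 1 → a i % p ≠ 0 := by
  classical
  set s := Finset.Icc 1 (p - 1) with hs
  have hg : ∀ r ∈ s, ∃ i, (1 ≤ i ∧ i ≤ p - 1) ∧ a i % p = r := by
    intro r hr
    rw [hs, Finset.mem_Icc] at hr
    obtain ⟨i, hi, _⟩ := hres r (by omega) (by omega)
    exact ⟨i, hi⟩
  choose g hg1 hg2 using hg
  have hmaps : ∀ r hr, g r hr ∈ s := fun r hr => Finset.mem_Icc.2 (hg1 r hr)
  have hinj : ∀ r₁ r₂ hr₁ hr₂, g r₁ hr₁ = g r₂ hr₂ → r₁ = r₂ := by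
    intro r₁ r₂ hr₁ hr₂ h
    rw [← hg2 r₁ hr₁, ← hg2 r₂ hr₂, h]
  have hsurj := Finset.surj_on_of_inj_on_of_card_le (t := s) (fun r hr => g r hr)
    hmaps hinj le_rfl
  intro i h1 h2 h0
  obtain ⟨r, hr, heq⟩ := hsurj i (Finset.mem_Icc.2 ⟨h1, h2⟩)
  have h3 := hg2 r hr
  have heq' : i = g r hr := heq
  rw [← heq'] at h3
  rw [hs, Finset.mem_Icc] at hr
  omega

/-- Theorem 6: for a `p`-extensible `p`-basis `A_{p-1}` with `b_i = a_{p-1} + i*p`,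
whenever `b_{k+1} ≥ 2*b_0` the value `b_{k+1}` has no generation from `A_{p-1+k}`,
and consequently `n(A_{p-1+k}) = b_{k+1} - 1`. -/
theorem stohr_of_extensible_p_basis (p : ℕ) (hp : 2 ≤ p) (a : ℕ → ℕ)
    (h0 : a 0 = 0) (h1 : a 1 = 1)
    (hmono : StrictMonoOn a (Set.Iic (p - 1)))
    (hres : ∀ r, 0 < r → r < p → ∃! i, (1 ≤ i ∧ i ≤ p - 1) ∧ a i % p = r)
    (hext : ∀ m : ℕ, ∀ x ≤ a (p - 1) + m * p,
      ∃ u, ((∃ i ≤ p - 1, a i = u) ∨ (∃ i ≤ m, a (p - 1) + i * p = u)) ∧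
      ∃ v, ((∃ i ≤ p - 1, a i = v) ∨ (∃ i ≤ m, a (p - 1) + i * p = v)) ∧ u + v = x) :
    ∀ k : ℕ, 2 * a (p - 1) ≤ a (p - 1) + (k + 1) * p →
      (¬ ∃ u, ((∃ i ≤ p - 1, a i = u) ∨ (∃ i ≤ k, a (p - 1) + i * p = u)) ∧
        ∃ v, ((∃ i ≤ p - 1, a i = v) ∨ (∃ i ≤ k, a (p - 1) + i * p = v)) ∧
          u + v = a (p - 1) + (k + 1) * p) ∧
      (∀ x ≤ a (p - 1) + (k + 1) * p - 1,
        ∃ u, ((∃ i ≤ p - 1, a i = u) ∨ (∃ i ≤ k, a (p - 1) + i * p = u)) ∧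
        ∃ v, ((∃ i ≤ p - 1, a i = v) ∨ (∃ i ≤ k, a (p - 1) + i * p = v)) ∧
          u + v = x) := by
  intro k hk
  have hpp : 0 < p := by omega
  have hires := stohr_aux_res p hp a hres
  have hbres : a (p - 1) % p ≠ 0 := hires (p - 1) (by omega) le_rfl
  have hble : ∀ i ≤ p - 1, a i ≤ a (p - 1) := by
    intro i hi
    rcases eq_or_lt_of_le hi with h | h
    · rw [h]
    · exact le_of_lt (hmono (Set.mem_Iic.2 hi) (Set.mem_Iic.2 le_rfl) h)
  have hb1 : 1 ≤ a (p - 1) := by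
    have := hble 1 (by omega)
    omega
  constructor
  · rintro ⟨u, hu, v, hv, huv⟩
    rcases hu with ⟨i, hi, rfl⟩ | ⟨i, hi, rfl⟩
    · rcases hv with ⟨j, hj, rfl⟩ | ⟨j, hj, rfl⟩
      · -- both from the basis: forces a(p-1) = (k+1)*p, contradicting residue
        have h1' := hble i hi
        have h2' := hble j hj
        have hbp : a (p - 1) = (k + 1) * p := by omega
        rw [hbp, Nat.mul_mod_left] at hbres
        exact hbres rfl
      · -- a i + (b + j*p) = b + (k+1)*p  ⟹  a i ≡ 0 mod p and a i ≥ p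
        have heq : a i + j * p = (k + 1) * p := by omega
        have hmod : a i % p = 0 := by
          have : (a i + j * p) % p = ((k + 1) * p) % p := by rw [heq]
          simpa [Nat.add_mul_mod_self_right, Nat.mul_mod_left] using this
        have hjk : j * p ≤ k * p := Nat.mul_le_mul_right p hj
        have hklp : (k + 1) * p = k * p + p := by ring
        have hai : p ≤ a i := by omega
        have hi1 : 1 ≤ i := by
          by_contra h
          have : i = 0 := by omega
          rw [this, h0] at hai; omega
        exact hires i hi1 hi hmod
    · rcases hv with ⟨j, hj, rfl⟩ | ⟨j, hj, rfl⟩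
      · have heq : a j + i * p = (k + 1) * p := by omega
        have hmod : a j % p = 0 := by
          have : (a j + i * p) % p = ((k + 1) * p) % p := by rw [heq]
          simpa [Nat.add_mul_mod_self_right, Nat.mul_mod_left] using this
        have hik : i * p ≤ k * p := Nat.mul_le_mul_right p hi
        have hklp : (k + 1) * p = k * p + p := by ring
        have haj : p ≤ a j := by omega
        have hj1 : 1 ≤ j := by
          by_contra h
          have : j = 0 := by omega
          rw [this, h0] at haj; omega
        exact hires j hj1 hj hmod
      · -- both extensions: b + (i+j)*p = (k+1)*p ⟹ b ≡ 0 mod p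
        have heq : a (p - 1) + (i + j) * p = (k + 1) * p := by
          have : (i + j) * p = i * p + j * p := by ring
          omega
        have hmod : a (p - 1) % p = 0 := by
          have : (a (p - 1) + (i + j) * p) % p = ((k + 1) * p) % p := by rw [heq]
          simpa [Nat.add_mul_mod_self_right, Nat.mul_mod_left] using this
        exact hbres hmod
  · intro x hx
    have hxN : x < a (p - 1) + (k + 1) * p := by omega
    obtain ⟨u, hu, v, hv, huv⟩ := hext (k + 1) x (by omega)
    have step : ∀ w, w ≤ x →
        ((∃ i ≤ p - 1, a i = w) ∨ (∃ i ≤ k + 1, a (p - 1) + i * p = w)) →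
        ((∃ i ≤ p - 1, a i = w) ∨ (∃ i ≤ k, a (p - 1) + i * p = w)) := by
      rintro w hw (h | ⟨i, hi, rfl⟩)
      · exact Or.inl h
      · refine Or.inr ⟨i, ?_, rfl⟩
        have : i * p < (k + 1) * p := by omega
        have := Nat.lt_of_mul_lt_mul_right this
        omega
    exact ⟨u, step u (by omega) hu, v, step v (by omega) hv, huv⟩
end

section
/- Let A_{p-1} be a p-extensible p-basis and let S(p)_k denote the symmetric basis formed by extending A_{p-1} by b_1,...,b_m (b_i = b_{i-1} + p, b_0 = a_{p-1}) and reflecting: appending c_i = b_m + (a_{p-1} - a_i) for i = p-2 down to 0. If S(p)_k is admissible for some m with b_m ≥ 2b_0, then S(p)_{k+1} (the analogous basis with m+1 extension terms) is also admissible. -/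
/-- Theorem 9(a): for a `p`-extensible `p`-basis, if the symmetric basis `S(p)_k`
(with `m` extension terms, `b_m ≥ 2*b_0`) is admissible, so is `S(p)_{k+1}`.
The elements of `S(p)_{2(p-1)+m}` are
`{a i : i ≤ p-1} ∪ {a (p-1) + i*p : i ≤ m} ∪ {a (p-1) + m*p + (a (p-1) - a i) : i ≤ p-1}`. -/
theorem symmetricisable_step_up (p m : ℕ) (hp : 2 ≤ p) (a : ℕ → ℕ)
    (h0 : a 0 = 0) (h1 : a 1 = 1)
    (hmono : StrictMonoOn a (Set.Iic (p - 1)))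
    (hres : ∀ r, 0 < r → r < p → ∃! i, (1 ≤ i ∧ i ≤ p - 1) ∧ a i % p = r)
    (hext : ∀ n : ℕ, ∀ x ≤ a (p - 1) + n * p,
      ∃ u, ((∃ i ≤ p - 1, a i = u) ∨ (∃ i ≤ n, a (p - 1) + i * p = u)) ∧
      ∃ v, ((∃ i ≤ p - 1, a i = v) ∨ (∃ i ≤ n, a (p - 1) + i * p = v)) ∧ u + v = x)
    (hm : 2 * a (p - 1) ≤ a (p - 1) + m * p)
    (hadm : ∀ x ≤ 2 * a (p - 1) + m * p,
      ∃ u, ((∃ i ≤ p - 1, a i = u) ∨ (∃ i ≤ m, a (p - 1) + i * p = u) ∨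
            (∃ i ≤ p - 1, a (p - 1) + m * p + (a (p - 1) - a i) = u)) ∧
      ∃ v, ((∃ i ≤ p - 1, a i = v) ∨ (∃ i ≤ m, a (p - 1) + i * p = v) ∨
            (∃ i ≤ p - 1, a (p - 1) + m * p + (a (p - 1) - a i) = v)) ∧ u + v = x) :
    ∀ x ≤ 2 * a (p - 1) + (m + 1) * p,
      ∃ u, ((∃ i ≤ p - 1, a i = u) ∨ (∃ i ≤ m + 1, a (p - 1) + i * p = u) ∨
            (∃ i ≤ p - 1, a (p - 1) + (m + 1) * p + (a (p - 1) - a i) = u)) ∧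
      ∃ v, ((∃ i ≤ p - 1, a i = v) ∨ (∃ i ≤ m + 1, a (p - 1) + i * p = v) ∨
            (∃ i ≤ p - 1, a (p - 1) + (m + 1) * p + (a (p - 1) - a i) = v)) ∧
        u + v = x := by
  intro x hx
  have hmp : (m + 1) * p = m * p + p := by ring
  by_cases hcase : x ≤ a (p - 1) + (m + 1) * p
  · obtain ⟨u, hu, v, hv, huv⟩ := hext (m + 1) x hcase
    refine ⟨u, ?_, v, ?_, huv⟩
    · rcases hu with h | h
      · exact Or.inl h
      · exact Or.inr (Or.inl h)
    · rcases hv with h | h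
      · exact Or.inl h
      · exact Or.inr (Or.inl h)
  · push_neg at hcase
    have hpx : p ≤ x := by omega
    obtain ⟨u, hu, v, hv, huv⟩ := hadm (x - p) (by omega)
    have hA : ∀ i ≤ p - 1, a i ≤ a (p - 1) := fun i hi =>
      hmono.monotoneOn (Set.mem_Iic.mpr hi) (Set.mem_Iic.mpr le_rfl) hi
    rcases hu with ⟨i, hi, hui⟩ | ⟨i, hi, hui⟩ | ⟨i, hi, hui⟩ <;>
      rcases hv with ⟨j, hj, hvj⟩ | ⟨j, hj, hvj⟩ | ⟨j, hj, hvj⟩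
    · -- A + A : impossible
      have h1 := hA i hi
      have h2 := hA j hj
      omega
    · -- A + B : shift v
      have hj' : (j + 1) * p = j * p + p := by ring
      exact ⟨u, Or.inl ⟨i, hi, hui⟩, a (p - 1) + (j + 1) * p,
        Or.inr (Or.inl ⟨j + 1, by omega, rfl⟩), by omega⟩
    · -- A + C : shift v
      exact ⟨u, Or.inl ⟨i, hi, hui⟩, a (p - 1) + (m + 1) * p + (a (p - 1) - a j),
        Or.inr (Or.inr ⟨j, hj, rfl⟩), by omega⟩
    · -- B + A : shift u
      have hi' : (i + 1) * p = i * p + p := by ring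
      exact ⟨a (p - 1) + (i + 1) * p, Or.inr (Or.inl ⟨i + 1, by omega, rfl⟩),
        v, Or.inl ⟨j, hj, hvj⟩, by omega⟩
    · -- B + B : shift u
      have hi' : (i + 1) * p = i * p + p := by ring
      exact ⟨a (p - 1) + (i + 1) * p, Or.inr (Or.inl ⟨i + 1, by omega, rfl⟩),
        v, Or.inr (Or.inl ⟨j, by omega, hvj⟩), by omega⟩
    · -- B + C : shift v
      exact ⟨u, Or.inr (Or.inl ⟨i, by omega, hui⟩),
        a (p - 1) + (m + 1) * p + (a (p - 1) - a j),
        Or.inr (Or.inr ⟨j, hj, rfl⟩), by omega⟩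
    · -- C + A : shift u
      exact ⟨a (p - 1) + (m + 1) * p + (a (p - 1) - a i),
        Or.inr (Or.inr ⟨i, hi, rfl⟩), v, Or.inl ⟨j, hj, hvj⟩, by omega⟩
    · -- C + B : shift u
      exact ⟨a (p - 1) + (m + 1) * p + (a (p - 1) - a i),
        Or.inr (Or.inr ⟨i, hi, rfl⟩), v, Or.inr (Or.inl ⟨j, by omega, hvj⟩), by omega⟩
    · -- C + C : forces m*p = 0 and both equal a (p-1)
      exact ⟨a (p - 1) + (m + 1) * p, Or.inr (Or.inl ⟨m + 1, le_rfl, rfl⟩),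
        a (p - 1), Or.inr (Or.inl ⟨0, Nat.zero_le _, by ring⟩), by omega⟩
end

section
/- Let A_{p-1} be a p-extensible p-basis and S(p)_k the symmetric basis built with m extension terms where b_m ≥ 2b_0. If S(p)_{k+1} (with m+1 extension terms) is admissible, then S(p)_k is admissible. -/
/-- Theorem 9(b): for a `p`-extensible `p`-basis with `b_m ≥ 2*b_0`, if the
symmetric basis `S(p)_{k+1}` (with `m+1` extension terms) is admissible,
then so is `S(p)_k` (with `m` extension terms).
The elements of `S(p)_{2(p-1)+m}` are
`{a i : i ≤ p-1} ∪ {a (p-1) + i*p : i ≤ m} ∪ {a (p-1) + m*p + (a (p-1) - a i) : i ≤ p-1}`. -/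
theorem symmetricisable_step_down (p m : ℕ) (hp : 2 ≤ p) (a : ℕ → ℕ)
    (h0 : a 0 = 0) (h1 : a 1 = 1)
    (hmono : StrictMonoOn a (Set.Iic (p - 1)))
    (hres : ∀ r, 0 < r → r < p → ∃! i, (1 ≤ i ∧ i ≤ p - 1) ∧ a i % p = r)
    (hext : ∀ n : ℕ, ∀ x ≤ a (p - 1) + n * p,
      ∃ u, ((∃ i ≤ p - 1, a i = u) ∨ (∃ i ≤ n, a (p - 1) + i * p = u)) ∧
      ∃ v, ((∃ i ≤ p - 1, a i = v) ∨ (∃ i ≤ n, a (p - 1) + i * p = v)) ∧ u + v = x)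
    (hm : 2 * a (p - 1) ≤ a (p - 1) + m * p)
    (hadm : ∀ x ≤ 2 * a (p - 1) + (m + 1) * p,
      ∃ u, ((∃ i ≤ p - 1, a i = u) ∨ (∃ i ≤ m + 1, a (p - 1) + i * p = u) ∨
            (∃ i ≤ p - 1, a (p - 1) + (m + 1) * p + (a (p - 1) - a i) = u)) ∧
      ∃ v, ((∃ i ≤ p - 1, a i = v) ∨ (∃ i ≤ m + 1, a (p - 1) + i * p = v) ∨
            (∃ i ≤ p - 1, a (p - 1) + (m + 1) * p + (a (p - 1) - a i) = v)) ∧ u + v = x) :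
    ∀ x ≤ 2 * a (p - 1) + m * p,
      ∃ u, ((∃ i ≤ p - 1, a i = u) ∨ (∃ i ≤ m, a (p - 1) + i * p = u) ∨
            (∃ i ≤ p - 1, a (p - 1) + m * p + (a (p - 1) - a i) = u)) ∧
      ∃ v, ((∃ i ≤ p - 1, a i = v) ∨ (∃ i ≤ m, a (p - 1) + i * p = v) ∨
            (∃ i ≤ p - 1, a (p - 1) + m * p + (a (p - 1) - a i) = v)) ∧
        u + v = x := by

  have hp0 : 0 < p := by omega
  have haA : ∀ i ≤ p - 1, a i ≤ a (p - 1) := fun i hi =>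
    hmono.monotoneOn (Set.mem_Iic.mpr hi) (Set.mem_Iic.mpr le_rfl) hi
  intro x hx
  by_cases hxm : x ≤ a (p - 1) + m * p
  · obtain ⟨u, hu, v, hv, huv⟩ := hext m x hxm
    refine ⟨u, ?_, v, ?_, huv⟩
    · rcases hu with h | h
      · exact Or.inl h
      · exact Or.inr (Or.inl h)
    · rcases hv with h | h
      · exact Or.inl h
      · exact Or.inr (Or.inl h)
  · push_neg at hxm
    have hmp : (m + 1) * p = m * p + p := by ring
    have hx1 : x + p ≤ 2 * a (p - 1) + (m + 1) * p := by omega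
    obtain ⟨u, hu, v, hv, huv⟩ := hadm (x + p) hx1
    rcases hu with ⟨i, hi, rfl⟩ | ⟨i, hi, rfl⟩ | ⟨i, hi, rfl⟩
    · -- u = a i
      rcases hv with ⟨j, hj, rfl⟩ | ⟨j, hj, rfl⟩ | ⟨j, hj, rfl⟩
      · -- both base: impossible
        exact absurd huv (by have := haA i hi; have := haA j hj; omega)
      · -- v = A + j*p
        rcases j with _ | j
        · exact absurd huv (by have := haA i hi; omega)
        · refine ⟨a i, Or.inl ⟨i, hi, rfl⟩,
            a (p - 1) + j * p, Or.inr (Or.inl ⟨j, by omega, rfl⟩), ?_⟩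
          have hj2 : (j + 1) * p = j * p + p := by ring
          omega
      · -- v symmetric: shift v
        refine ⟨a i, Or.inl ⟨i, hi, rfl⟩,
          a (p - 1) + m * p + (a (p - 1) - a j), Or.inr (Or.inr ⟨j, hj, rfl⟩), ?_⟩
        omega
    · -- u = A + i*p
      rcases hv with ⟨j, hj, rfl⟩ | ⟨j, hj, rfl⟩ | ⟨j, hj, rfl⟩
      · -- v = a j
        rcases i with _ | i
        · exact absurd huv (by have := haA j hj; omega)
        · refine ⟨a (p - 1) + i * p, Or.inr (Or.inl ⟨i, by omega, rfl⟩),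
            a j, Or.inl ⟨j, hj, rfl⟩, ?_⟩
          have hi2 : (i + 1) * p = i * p + p := by ring
          omega
      · -- both extension
        rcases i with _ | i <;> rcases j with _ | j
        · exact absurd huv (by omega)
        · refine ⟨a (p - 1) + 0 * p, Or.inr (Or.inl ⟨0, Nat.zero_le _, rfl⟩),
            a (p - 1) + j * p, Or.inr (Or.inl ⟨j, by omega, rfl⟩), ?_⟩
          have hj2 : (j + 1) * p = j * p + p := by ring
          omega
        · refine ⟨a (p - 1) + i * p, Or.inr (Or.inl ⟨i, by omega, rfl⟩),
            a (p - 1) + 0 * p, Or.inr (Or.inl ⟨0, Nat.zero_le _, rfl⟩), ?_⟩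
          have hi2 : (i + 1) * p = i * p + p := by ring
          omega
        · have hi2 : (i + 1) * p = i * p + p := by ring
          have hj2 : (j + 1) * p = j * p + p := by ring
          by_cases hjm : j + 1 ≤ m
          · refine ⟨a (p - 1) + i * p, Or.inr (Or.inl ⟨i, by omega, rfl⟩),
              a (p - 1) + (j + 1) * p, Or.inr (Or.inl ⟨j + 1, hjm, rfl⟩), ?_⟩
            omega
          · by_cases him : i + 1 ≤ m
            · refine ⟨a (p - 1) + (i + 1) * p, Or.inr (Or.inl ⟨i + 1, him, rfl⟩),
                a (p - 1) + j * p, Or.inr (Or.inl ⟨j, by omega, rfl⟩), ?_⟩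
              omega
            · exfalso
              have hi3 : i = m := by omega
              have hj3 : j = m := by omega
              subst hi3; subst hj3
              omega
      · -- v symmetric: shift v, need i ≤ m
        have him : i ≤ m := by
          by_contra h
          have hi3 : i = m + 1 := by omega
          subst hi3
          omega
        refine ⟨a (p - 1) + i * p, Or.inr (Or.inl ⟨i, him, rfl⟩),
          a (p - 1) + m * p + (a (p - 1) - a j), Or.inr (Or.inr ⟨j, hj, rfl⟩), ?_⟩
        omega
    · -- u symmetric: shift u
      rcases hv with ⟨j, hj, rfl⟩ | ⟨j, hj, rfl⟩ | ⟨j, hj, rfl⟩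
      · refine ⟨a (p - 1) + m * p + (a (p - 1) - a i), Or.inr (Or.inr ⟨i, hi, rfl⟩),
          a j, Or.inl ⟨j, hj, rfl⟩, ?_⟩
        omega
      · have hjm : j ≤ m := by
          by_contra h
          have hj3 : j = m + 1 := by omega
          subst hj3
          omega
        refine ⟨a (p - 1) + m * p + (a (p - 1) - a i), Or.inr (Or.inr ⟨i, hi, rfl⟩),
          a (p - 1) + j * p, Or.inr (Or.inl ⟨j, hjm, rfl⟩), ?_⟩
        omega
      · exfalso
        omega
end

section
/- Let A_p = {0, 1, a_2, ..., a_p} be a p-extensible basis (a 'p+-basis') and define the symmetric set S(p)_k = A_p ∪ {b_1,...,b_m} ∪ {c_{p-1},...,c_0} where b_0 = a_p, b_i = b_{i-1} + p, c_i = b_m + (a_p - a_i), and k = 2p + m. If S(p)_k is admissible for some m with b_m ≥ 2b_0, then S(p)_{k+1} is admissible; hence S(p)_{k'} is admissible for all k' ≥ k. -/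
/-- Auxiliary step: admissibility of `S(p)_{2p+m}` implies that of `S(p)_{2p+m+1}`. -/
lemma p_plus_step (p m : ℕ) (a : ℕ → ℕ)
    (hmono : StrictMonoOn a (Set.Iic p))
    (hext : ∀ n : ℕ, ∀ x ≤ a p + n * p,
      ∃ u, ((∃ i ≤ p, a i = u) ∨ (∃ i ≤ n, a p + i * p = u)) ∧
      ∃ v, ((∃ i ≤ p, a i = v) ∨ (∃ i ≤ n, a p + i * p = v)) ∧ u + v = x)
    (hm : 2 * a p ≤ a p + m * p)
    (hadm : ∀ x ≤ 2 * a p + m * p,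
      ∃ u, ((∃ i ≤ p, a i = u) ∨ (∃ i ≤ m, a p + i * p = u) ∨
            (∃ i ≤ p, a p + m * p + (a p - a i) = u)) ∧
      ∃ v, ((∃ i ≤ p, a i = v) ∨ (∃ i ≤ m, a p + i * p = v) ∨
            (∃ i ≤ p, a p + m * p + (a p - a i) = v)) ∧ u + v = x) :
    ∀ x ≤ 2 * a p + (m + 1) * p,
      ∃ u, ((∃ i ≤ p, a i = u) ∨ (∃ i ≤ m + 1, a p + i * p = u) ∨
            (∃ i ≤ p, a p + (m + 1) * p + (a p - a i) = u)) ∧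
      ∃ v, ((∃ i ≤ p, a i = v) ∨ (∃ i ≤ m + 1, a p + i * p = v) ∨
            (∃ i ≤ p, a p + (m + 1) * p + (a p - a i) = v)) ∧ u + v = x := by
  intro x hx
  have hmul : (m + 1) * p = m * p + p := by ring
  by_cases hc : x ≤ a p + (m + 1) * p
  · obtain ⟨u, hu, v, hv, huv⟩ := hext (m + 1) x hc
    exact ⟨u, hu.imp id Or.inl, v, hv.imp id Or.inl, huv⟩
  · push_neg at hc
    have hap : ∀ i, i ≤ p → a i ≤ a p := fun i hi =>
      hmono.monotoneOn (Set.mem_Iic.2 hi) (Set.mem_Iic.2 le_rfl) hi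
    obtain ⟨u, hu, v, hv, huv⟩ := hadm (x - p) (by omega)
    have hsum : u + v + p = x := by omega
    rcases hu with ⟨i, hi, hui⟩ | ⟨i, hi, hui⟩ | ⟨i, hi, hui⟩
    · rcases hv with ⟨j, hj, hvj⟩ | ⟨j, hj, hvj⟩ | ⟨j, hj, hvj⟩
      · -- both small: impossible
        have h1 := hap i hi
        have h2 := hap j hj
        omega
      · -- bump v from second type
        refine ⟨u, Or.inl ⟨i, hi, hui⟩, a p + (j + 1) * p,
          Or.inr (Or.inl ⟨j + 1, by omega, rfl⟩), ?_⟩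
        have : (j + 1) * p = j * p + p := by ring
        omega
      · -- bump v from third type
        refine ⟨u, Or.inl ⟨i, hi, hui⟩, a p + (m + 1) * p + (a p - a j),
          Or.inr (Or.inr ⟨j, hj, rfl⟩), by omega⟩
    · rcases hv with ⟨j, hj, hvj⟩ | ⟨j, hj, hvj⟩ | ⟨j, hj, hvj⟩
      · -- bump u from second type
        refine ⟨a p + (i + 1) * p, Or.inr (Or.inl ⟨i + 1, by omega, rfl⟩),
          v, Or.inl ⟨j, hj, hvj⟩, ?_⟩
        have : (i + 1) * p = i * p + p := by ring
        omega
      · refine ⟨a p + (i + 1) * p, Or.inr (Or.inl ⟨i + 1, by omega, rfl⟩),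
          v, Or.inr (Or.inl ⟨j, by omega, hvj⟩), ?_⟩
        have : (i + 1) * p = i * p + p := by ring
        omega
      · -- keep u (second type), bump v (third type)
        refine ⟨u, Or.inr (Or.inl ⟨i, by omega, hui⟩),
          a p + (m + 1) * p + (a p - a j), Or.inr (Or.inr ⟨j, hj, rfl⟩), by omega⟩
    · rcases hv with ⟨j, hj, hvj⟩ | ⟨j, hj, hvj⟩ | ⟨j, hj, hvj⟩
      · -- bump u from third type
        refine ⟨a p + (m + 1) * p + (a p - a i), Or.inr (Or.inr ⟨i, hi, rfl⟩),
          v, Or.inl ⟨j, hj, hvj⟩, by omega⟩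
      · refine ⟨a p + (m + 1) * p + (a p - a i), Or.inr (Or.inr ⟨i, hi, rfl⟩),
          v, Or.inr (Or.inl ⟨j, by omega, hvj⟩), by omega⟩
      · -- both third type: forces m*p = 0 and u = v = a p
        have hu0 : u = a p + m * p := by omega
        have hv0 : v = a p + m * p := by omega
        refine ⟨a p + (m + 1) * p, Or.inr (Or.inl ⟨m + 1, le_rfl, rfl⟩),
          a p + m * p, Or.inr (Or.inl ⟨m, by omega, rfl⟩), by omega⟩

/-- Theorem 10: for a `p`-extensible `p+`-basis `A_p = {0,1,a_2,…,a_p}`, if the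
symmetric basis `S(p)_k` (with `m` extension terms, `b_m ≥ 2*b_0`, `b_0 = a p`)
is admissible, then `S(p)_{k+1}` is admissible; hence `S(p)_{k'}` is admissible
for all `k' ≥ k`. Elements of `S(p)_{2p+m}` are
`{a i : i ≤ p} ∪ {a p + i*p : i ≤ m} ∪ {a p + m*p + (a p - a i) : i ≤ p}`. -/
theorem p_plus_symmetricisable (p m : ℕ) (hp : 2 ≤ p) (a : ℕ → ℕ)
    (h0 : a 0 = 0) (h1 : a 1 = 1)
    (hmono : StrictMonoOn a (Set.Iic p))
    (hext : ∀ n : ℕ, ∀ x ≤ a p + n * p,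
      ∃ u, ((∃ i ≤ p, a i = u) ∨ (∃ i ≤ n, a p + i * p = u)) ∧
      ∃ v, ((∃ i ≤ p, a i = v) ∨ (∃ i ≤ n, a p + i * p = v)) ∧ u + v = x)
    (hm : 2 * a p ≤ a p + m * p)
    (hadm : ∀ x ≤ 2 * a p + m * p,
      ∃ u, ((∃ i ≤ p, a i = u) ∨ (∃ i ≤ m, a p + i * p = u) ∨
            (∃ i ≤ p, a p + m * p + (a p - a i) = u)) ∧
      ∃ v, ((∃ i ≤ p, a i = v) ∨ (∃ i ≤ m, a p + i * p = v) ∨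
            (∃ i ≤ p, a p + m * p + (a p - a i) = v)) ∧ u + v = x) :
    (∀ x ≤ 2 * a p + (m + 1) * p,
      ∃ u, ((∃ i ≤ p, a i = u) ∨ (∃ i ≤ m + 1, a p + i * p = u) ∨
            (∃ i ≤ p, a p + (m + 1) * p + (a p - a i) = u)) ∧
      ∃ v, ((∃ i ≤ p, a i = v) ∨ (∃ i ≤ m + 1, a p + i * p = v) ∨
            (∃ i ≤ p, a p + (m + 1) * p + (a p - a i) = v)) ∧ u + v = x) ∧
    (∀ m', m ≤ m' → ∀ x ≤ 2 * a p + m' * p,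
      ∃ u, ((∃ i ≤ p, a i = u) ∨ (∃ i ≤ m', a p + i * p = u) ∨
            (∃ i ≤ p, a p + m' * p + (a p - a i) = u)) ∧
      ∃ v, ((∃ i ≤ p, a i = v) ∨ (∃ i ≤ m', a p + i * p = v) ∨
            (∃ i ≤ p, a p + m' * p + (a p - a i) = v)) ∧ u + v = x) := by
  constructor
  · exact p_plus_step p m a hmono hext hm hadm
  · intro m' hm'
    induction m', hm' using Nat.le_induction with
    | base => exact hadm
    | succ n hn ih =>
      have hmn : m * p ≤ n * p := Nat.mul_le_mul_right p hn
      exact p_plus_step p n a hmono hext (by omega) ih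
end

section
/- For the basis A_17 = {0, 1, 3, 4, 5, 8, 12, 13, 15, 16, 17, 20, 24, 25, 27, 28, 29, 32} with p = 18, the Stöhr sequence continues 62, 68, 98, 104, ... with differences alternating 30, 6, 30, 6, ..., i.e. the subsequent terms follow a 2-periodic pattern of increments with average increment 18. -/
namespace StohrA17

def A : Finset ℕ := {0, 1, 3, 4, 5, 8, 12, 13, 15, 16, 17, 20, 24, 25, 27, 28, 29, 32}

def f (k : ℕ) : ℕ := 62 + 36 * (k / 2) + 6 * (k % 2)

lemma mem_A_iff (u : ℕ) : u ∈ A ↔ (u = 0 ∨ u = 1 ∨ u = 3 ∨ u = 4 ∨ u = 5 ∨ u = 8 ∨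
    u = 12 ∨ u = 13 ∨ u = 15 ∨ u = 16 ∨ u = 17 ∨ u = 20 ∨ u = 24 ∨ u = 25 ∨
    u = 27 ∨ u = 28 ∨ u = 29 ∨ u = 32) := by
  simp [A]

lemma nonrep (i : ℕ) :
    ¬ ∃ u, (u ∈ A ∨ ∃ t < i, f t = u) ∧ ∃ v, (v ∈ A ∨ ∃ t < i, f t = v) ∧ u + v = f i := by
  rintro ⟨u, hu, v, hv, huv⟩
  rcases hu with hu | ⟨t, ht, rfl⟩ <;> rcases hv with hv | ⟨t', ht', rfl⟩
  · rw [mem_A_iff] at hu hv; simp only [f] at huv; omega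
  · rw [mem_A_iff] at hu; simp only [f] at huv; omega
  · rw [mem_A_iff] at hv; simp only [f] at huv; omega
  · simp only [f] at huv; omega

lemma repA : ∀ x < 62, ∃ u ∈ A, ∃ v ∈ A, u + v = x := by decide

lemma repAll (i x : ℕ) (hx : x < f i) :
    ∃ u, (u ∈ A ∨ ∃ t < i, f t = u) ∧ ∃ v, (v ∈ A ∨ ∃ t < i, f t = v) ∧ u + v = x := by
  by_cases h62 : x < 62
  · obtain ⟨u, hu, v, hv, huv⟩ := repA x h62
    exact ⟨u, Or.inl hu, v, Or.inl hv, huv⟩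
  · push_neg at h62
    obtain ⟨d, hd, hd36⟩ : ∃ d, x = 62 + 36 * ((x - 62) / 36) + d ∧ d < 36 := ⟨x - (62 + 36 * ((x - 62) / 36)), by omega⟩
    set q := (x - 62) / 36 with hq
    have hfi : f i = 62 + 36 * (i / 2) + 6 * (i % 2) := rfl
    have h2q : 2 * q < i := by omega
    by_cases hdA : d ∈ A
    · exact ⟨f (2 * q), Or.inr ⟨2 * q, h2q, rfl⟩, d, Or.inl hdA,
        by simp only [f]; omega⟩
    · rw [mem_A_iff] at hdA
      by_cases hd2 : d = 2
      · rcases Nat.eq_zero_or_pos q with hq0 | hq1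
        · refine ⟨32, Or.inl (by decide), 32, Or.inl (by decide), by omega⟩
        · refine ⟨f (2 * q - 1), Or.inr ⟨2 * q - 1, by omega, rfl⟩, 32, Or.inl (by decide),
            ?_⟩
          simp only [f]; omega
      · -- d ≥ 6 here (d ∉ A, d ≠ 2), use f(2q+1) + (d-6)
        have h2q1 : 2 * q + 1 < i := by omega
        refine ⟨f (2 * q + 1), Or.inr ⟨2 * q + 1, h2q1, rfl⟩, d - 6, Or.inl ?_, ?_⟩
        · rw [mem_A_iff]; omega
        · simp only [f]; omega

end StohrA17

/-- The Stöhr sequence of `A_17 = {0,1,3,4,5,8,12,13,15,16,17,20,24,25,27,28,29,32}`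
continues 62, 68, 98, 104, …, with differences alternating 30, 6, 30, 6, …:
`s (2i) = 62 + 36*i` and `s (2i+1) = 68 + 36*i`. Here `s i = n(B i) + 1` where
`B i` is the basis extended by the previous Stöhr terms and `n` is the 2-range. -/
theorem stohr_sequence_A17 (s : ℕ → ℕ)
    (hs : ∀ i : ℕ,
      (∀ x ≤ s i - 1,
        ∃ u ∈ (↑({0, 1, 3, 4, 5, 8, 12, 13, 15, 16, 17, 20, 24, 25, 27, 28, 29, 32} :
            Finset ℕ) ∪ {y | ∃ t < i, s t = y} : Set ℕ),
        ∃ v ∈ (↑({0, 1, 3, 4, 5, 8, 12, 13, 15, 16, 17, 20, 24, 25, 27, 28, 29, 32} :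
            Finset ℕ) ∪ {y | ∃ t < i, s t = y} : Set ℕ), u + v = x) ∧
      ¬ (∃ u ∈ (↑({0, 1, 3, 4, 5, 8, 12, 13, 15, 16, 17, 20, 24, 25, 27, 28, 29, 32} :
            Finset ℕ) ∪ {y | ∃ t < i, s t = y} : Set ℕ),
         ∃ v ∈ (↑({0, 1, 3, 4, 5, 8, 12, 13, 15, 16, 17, 20, 24, 25, 27, 28, 29, 32} :
            Finset ℕ) ∪ {y | ∃ t < i, s t = y} : Set ℕ), u + v = s i)) :
    ∀ i : ℕ, s (2 * i) = 62 + 36 * i ∧ s (2 * i + 1) = 68 + 36 * i := by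
  have key : ∀ i : ℕ, s i = StohrA17.f i := by
    intro i
    induction i using Nat.strong_induction_on with
    | _ i IH =>
      obtain ⟨H1, H2⟩ := hs i
      have hmem : ∀ y : ℕ,
          (y ∈ (↑({0, 1, 3, 4, 5, 8, 12, 13, 15, 16, 17, 20, 24, 25, 27, 28, 29, 32} :
            Finset ℕ) ∪ {y | ∃ t < i, s t = y} : Set ℕ)) ↔
          (y ∈ StohrA17.A ∨ ∃ t < i, StohrA17.f t = y) := by
        intro y
        simp only [Set.mem_union, Finset.mem_coe, Set.mem_setOf_eq]
        refine or_congr Iff.rfl ?_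
        constructor
        · rintro ⟨t, ht, h⟩; exact ⟨t, ht, by rw [← IH t ht]; exact h⟩
        · rintro ⟨t, ht, h⟩; exact ⟨t, ht, by rw [IH t ht]; exact h⟩
      rcases lt_trichotomy (s i) (StohrA17.f i) with h | h | h
      · obtain ⟨u, hu, v, hv, huv⟩ := StohrA17.repAll i (s i) h
        exact absurd ⟨u, (hmem u).mpr hu, v, (hmem v).mpr hv, huv⟩ H2
      · exact h
      · have hfi : StohrA17.f i = 62 + 36 * (i / 2) + 6 * (i % 2) := rfl
        obtain ⟨u, hu, v, hv, huv⟩ := H1 (StohrA17.f i) (by omega)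
        exact absurd ⟨u, ((hmem u).mp hu), v, ((hmem v).mp hv), huv⟩ (StohrA17.nonrep i)
  intro i
  have h1 := key (2 * i)
  have h2 := key (2 * i + 1)
  simp only [StohrA17.f] at h1 h2
  omega
end

section
/- If A_{p-1} is a p-basis and k satisfies b_{k+1} ≥ 2b_0 (where b_i = a_{p-1} + ip), then the Stöhr sequence generated from A_{p-1+k} is eventually 1-periodic with constant difference p, provided A_{p-1} is p-extensible: a_{p-1+k+i+1} = a_{p-1+k+i} + p for all i ≥ 0. -/
/-!
Write `b_i = a_{p-1} + i p`. Every residue `r ≠ 0` mod `p` is hit by some `a_i` with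
`1 ≤ i ≤ p - 1`, and there are only `p - 1` such indices, so none of them is divisible by `p`.
Hence `b_{m+1}` (for `m ≥ k`) is not a sum of two elements of `A_{p-1} ∪ {b_0, …, b_m}`:
a sum `a_i + b_j` or `b_i + b_j` would make `a_i` or `a_{p-1}` divisible by `p`, and
`a_i + a_j ≤ 2 b_0 ≤ b_{m+1}` forces `b_0 = (m + 1) p`. Extensibility represents everything
below `b_{m+1}`, so `b_{m+1}` is the first gap, and by induction the `i`-th Stöhr term is
`b_{k+1+i}`.
-/
open Pointwise

namespace Stohr

lemma mod_ne_zero_of_forall_exists_mod_eq {a : ℕ → ℕ} {p : ℕ}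
    (hres : ∀ r, 0 < r → r < p → ∃ i, (1 ≤ i ∧ i ≤ p - 1) ∧ a i % p = r)
    {j : ℕ} (hj₁ : 1 ≤ j) (hj : j ≤ p - 1) : a j % p ≠ 0 := by
  have hsub : Finset.Icc 1 (p - 1) ⊆ (Finset.Icc 1 (p - 1)).image (a · % p) := by
    intro r hr
    rw [Finset.mem_Icc] at hr
    obtain ⟨i, hi, hir⟩ := hres r (by omega) (by omega)
    exact Finset.mem_image.mpr ⟨i, Finset.mem_Icc.mpr hi, hir⟩
  have himage := Finset.eq_of_subset_of_card_le hsub Finset.card_image_le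
  have hmem : a j % p ∈ Finset.Icc 1 (p - 1) :=
    himage ▸ Finset.mem_image_of_mem _ (Finset.mem_Icc.mpr ⟨hj₁, hj⟩)
  rw [Finset.mem_Icc] at hmem
  omega

/-- The paper's `A_{p-1+m} = A_{p-1} ∪ {b_1, …, b_m}`. -/
def extBasis (a : ℕ → ℕ) (p m : ℕ) : Set ℕ :=
  {y | ∃ i ≤ p - 1, a i = y} ∪ {y | ∃ i ≤ m, a (p - 1) + i * p = y}

lemma extBasis_succ (a : ℕ → ℕ) (p m : ℕ) :
    extBasis a p (m + 1) = insert (a (p - 1) + (m + 1) * p) (extBasis a p m) := by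
  ext y
  simp only [extBasis, Set.mem_insert_iff, Set.mem_union, Set.mem_ofPred_eq]
  constructor
  · rintro (h | ⟨i, hi, rfl⟩)
    · exact Or.inr (Or.inl h)
    · rcases Nat.le_succ_iff.mp hi with hi | rfl
      · exact Or.inr (Or.inr ⟨i, hi, rfl⟩)
      · exact Or.inl rfl
  · rintro (rfl | h | ⟨i, hi, rfl⟩)
    · exact Or.inr ⟨m + 1, le_rfl, rfl⟩
    · exact Or.inl h
    · exact Or.inr ⟨i, hi.trans m.le_succ, rfl⟩

lemma mem_extBasis_add_of_lt {a : ℕ → ℕ} {p m x : ℕ}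
    (hext : x ≤ a (p - 1) + (m + 1) * p →
      x ∈ extBasis a p (m + 1) + extBasis a p (m + 1))
    (hx : x < a (p - 1) + (m + 1) * p) : x ∈ extBasis a p m + extBasis a p m := by
  obtain ⟨u, hu, v, hv, rfl⟩ := Set.mem_add.mp (hext hx.le)
  rw [extBasis_succ] at hu hv
  exact Set.add_mem_add (hu.resolve_left (by omega)) (hv.resolve_left (by omega))

lemma apply_add_stride_ne {a : ℕ → ℕ} {p m i j : ℕ} (hp : 0 < p) (h0 : a 0 = 0)
    (hmod : ∀ j, 1 ≤ j → j ≤ p - 1 → a j % p ≠ 0) (hi : i ≤ p - 1) (hj : j ≤ m) :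
    a i + (a (p - 1) + j * p) ≠ a (p - 1) + (m + 1) * p := by
  intro h
  have hij : a i + j * p = (m + 1) * p := by omega
  have hi₁ : 1 ≤ i := by
    rcases Nat.eq_zero_or_pos i with rfl | hi₁
    · rw [h0, zero_add] at hij
      have := Nat.eq_of_mul_eq_mul_right hp hij
      omega
    · exact hi₁
  apply hmod i hi₁ hi
  simpa [Nat.add_mul_mod_self_right] using congrArg (· % p) hij

lemma not_mem_extBasis_add {a : ℕ → ℕ} {p m : ℕ} (hp : 2 ≤ p) (h0 : a 0 = 0)
    (hmod : ∀ j, 1 ≤ j → j ≤ p - 1 → a j % p ≠ 0) (hle : ∀ i ≤ p - 1, a i ≤ a (p - 1))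
    (hm : a (p - 1) ≤ (m + 1) * p) :
    a (p - 1) + (m + 1) * p ∉ extBasis a p m + extBasis a p m := by
  have hlast : a (p - 1) % p ≠ 0 := hmod (p - 1) (by omega) le_rfl
  rintro ⟨u, (⟨i, hi, rfl⟩ | ⟨i, hi, rfl⟩), v, (⟨j, hj, rfl⟩ | ⟨j, hj, rfl⟩), h⟩ <;>
    simp only at h
  · have := hle i hi
    have := hle j hj
    exact hlast (by rw [show a (p - 1) = (m + 1) * p by omega, Nat.mul_mod_left])
  · exact apply_add_stride_ne (by omega) h0 hmod hi hj h
  · exact apply_add_stride_ne (by omega) h0 hmod hj hi (by rwa [add_comm])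
  · apply hlast
    have h' : a (p - 1) + (i + j) * p = (m + 1) * p := by rw [add_mul]; omega
    simpa [Nat.add_mul_mod_self_right] using congrArg (· % p) h'

lemma extBasis_union_stohr {a s : ℕ → ℕ} {p k i : ℕ}
    (hs : ∀ t < i, s t = a (p - 1) + (k + 1 + t) * p) :
    extBasis a p k ∪ {y | ∃ t < i, s t = y} = extBasis a p (k + i) := by
  ext y
  simp only [extBasis, Set.mem_union, Set.mem_ofPred_eq]
  constructor
  · rintro ((h | ⟨j, hj, rfl⟩) | ⟨t, ht, rfl⟩)
    · exact Or.inl h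
    · exact Or.inr ⟨j, by omega, rfl⟩
    · exact Or.inr ⟨k + 1 + t, by omega, (hs t ht).symm⟩
  · rintro (h | ⟨j, hj, rfl⟩)
    · exact Or.inl (Or.inl h)
    · rcases le_or_gt j k with hjk | hjk
      · exact Or.inl (Or.inr ⟨j, hjk, rfl⟩)
      · refine Or.inr ⟨j - (k + 1), by omega, ?_⟩
        rw [hs _ (by omega), show k + 1 + (j - (k + 1)) = j by omega]

-- `m - 1` is truncated subtraction, as in the Stöhr recurrence; `hm'` excludes `m = 0`.
lemma eq_of_first_gap {T : Set ℕ} {m n : ℕ} (hm : ∀ x ≤ m - 1, x ∈ T) (hm' : m ∉ T)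
    (hn : ∀ x < n, x ∈ T) (hn' : n ∉ T) : m = n := by
  rcases lt_trichotomy m n with h | h | h
  · exact absurd (hn m h) hm'
  · exact h
  · exact absurd (hm n (by omega)) hn'

end Stohr

open Stohr in
theorem stohr_one_periodic_general (p k : ℕ) (hp : 2 ≤ p) (a : ℕ → ℕ)
    (h0 : a 0 = 0)
    (hmono : StrictMonoOn a (Set.Iic (p - 1)))
    (hres : ∀ r, 0 < r → r < p → ∃! i, (1 ≤ i ∧ i ≤ p - 1) ∧ a i % p = r)
    (hext : ∀ m : ℕ, ∀ x ≤ a (p - 1) + m * p,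
      ∃ u, ((∃ i ≤ p - 1, a i = u) ∨ (∃ i ≤ m, a (p - 1) + i * p = u)) ∧
      ∃ v, ((∃ i ≤ p - 1, a i = v) ∨ (∃ i ≤ m, a (p - 1) + i * p = v)) ∧ u + v = x)
    (hk : 2 * a (p - 1) ≤ a (p - 1) + (k + 1) * p)
    (s : ℕ → ℕ)
    (hs : ∀ i : ℕ,
      (∀ x ≤ s i - 1,
        ∃ u ∈ ({y | ∃ i' ≤ p - 1, a i' = y} ∪ {y | ∃ i' ≤ k, a (p - 1) + i' * p = y}
            ∪ {y | ∃ t < i, s t = y} : Set ℕ),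
        ∃ v ∈ ({y | ∃ i' ≤ p - 1, a i' = y} ∪ {y | ∃ i' ≤ k, a (p - 1) + i' * p = y}
            ∪ {y | ∃ t < i, s t = y} : Set ℕ), u + v = x) ∧
      ¬ (∃ u ∈ ({y | ∃ i' ≤ p - 1, a i' = y} ∪ {y | ∃ i' ≤ k, a (p - 1) + i' * p = y}
            ∪ {y | ∃ t < i, s t = y} : Set ℕ),
         ∃ v ∈ ({y | ∃ i' ≤ p - 1, a i' = y} ∪ {y | ∃ i' ≤ k, a (p - 1) + i' * p = y}
            ∪ {y | ∃ t < i, s t = y} : Set ℕ), u + v = s i)) :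
    s 0 = a (p - 1) + (k + 1) * p ∧ ∀ i : ℕ, s (i + 1) = s i + p := by
  have hmod : ∀ j, 1 ≤ j → j ≤ p - 1 → a j % p ≠ 0 := fun _ =>
    mod_ne_zero_of_forall_exists_mod_eq fun r h₁ h₂ => (hres r h₁ h₂).exists
  have hle : ∀ i ≤ p - 1, a i ≤ a (p - 1) := fun i hi => hmono.monotoneOn hi (Set.mem_Iic.mpr le_rfl) hi
  have key : ∀ i, s i = a (p - 1) + (k + 1 + i) * p := by
    intro i
    induction i using Nat.strong_induction_on with
    | _ i IH =>
      obtain ⟨hrep, hgap⟩ := hs i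
      have hbasis := extBasis_union_stohr IH
      rw [show k + 1 + i = k + i + 1 by omega]
      refine eq_of_first_gap (T := extBasis a p (k + i) + extBasis a p (k + i))
        (fun x hx => hbasis ▸ hrep x hx) (hbasis ▸ hgap)
        (fun x hx => mem_extBasis_add_of_lt (hext (k + i + 1) x) hx) ?_
      exact not_mem_extBasis_add hp h0 hmod hle
        ((by omega : a (p - 1) ≤ (k + 1) * p).trans (Nat.mul_le_mul_right p (by omega)))
  refine ⟨by simpa using key 0, fun i => ?_⟩
  rw [key, key]
  ring

/-- Corollary to Theorem 6: for a `p`-extensible `p`-basis `A_{p-1}` and `k` with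
`b_{k+1} ≥ 2*b_0`, the Stöhr sequence generated from `A_{p-1+k}` is 1-periodic
with value `p`: `s 0 = b_{k+1}` and `s (i+1) = s i + p` for all `i`. Here `s`
satisfies the Stöhr recurrence `s i = n(current basis) + 1`, the current basis
being `A_{p-1+k}` extended by the previous Stöhr terms. -/
theorem stohr_one_periodic (p k : ℕ) (hp : 2 ≤ p) (a : ℕ → ℕ)
    (h0 : a 0 = 0) (h1 : a 1 = 1)
    (hmono : StrictMonoOn a (Set.Iic (p - 1)))
    (hres : ∀ r, 0 < r → r < p → ∃! i, (1 ≤ i ∧ i ≤ p - 1) ∧ a i % p = r)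
    (hext : ∀ m : ℕ, ∀ x ≤ a (p - 1) + m * p,
      ∃ u, ((∃ i ≤ p - 1, a i = u) ∨ (∃ i ≤ m, a (p - 1) + i * p = u)) ∧
      ∃ v, ((∃ i ≤ p - 1, a i = v) ∨ (∃ i ≤ m, a (p - 1) + i * p = v)) ∧ u + v = x)
    (hk : 2 * a (p - 1) ≤ a (p - 1) + (k + 1) * p)
    (s : ℕ → ℕ)
    (hs : ∀ i : ℕ,
      (∀ x ≤ s i - 1,
        ∃ u ∈ ({y | ∃ i' ≤ p - 1, a i' = y} ∪ {y | ∃ i' ≤ k, a (p - 1) + i' * p = y}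
            ∪ {y | ∃ t < i, s t = y} : Set ℕ),
        ∃ v ∈ ({y | ∃ i' ≤ p - 1, a i' = y} ∪ {y | ∃ i' ≤ k, a (p - 1) + i' * p = y}
            ∪ {y | ∃ t < i, s t = y} : Set ℕ), u + v = x) ∧
      ¬ (∃ u ∈ ({y | ∃ i' ≤ p - 1, a i' = y} ∪ {y | ∃ i' ≤ k, a (p - 1) + i' * p = y}
            ∪ {y | ∃ t < i, s t = y} : Set ℕ),
         ∃ v ∈ ({y | ∃ i' ≤ p - 1, a i' = y} ∪ {y | ∃ i' ≤ k, a (p - 1) + i' * p = y}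
            ∪ {y | ∃ t < i, s t = y} : Set ℕ), u + v = s i)) :
    s 0 = a (p - 1) + (k + 1) * p ∧ ∀ i : ℕ, s (i + 1) = s i + p :=
  stohr_one_periodic_general p k hp a h0 hmono hres hext hk s hs
end
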